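/- arXiv:1510.06496 — 5 statements merged into one kernel-verified Lean document; each statement's English description precedes it below -/
import Mathlib

section
/- No state outside Losing is a blocking state of the α⁰-restricted arena: for every s ∈ S ∖ Losing, s does not belong to the set of blocking states computed relative to the nominal adviser α⁰. In other words, the blocking states of the α⁰-restricted arena are contained in Losing, so the non-blocking α⁰-restricted arena retains all states outside Losing. -/
open Filter

/-- A finite turn-based game arena: states `S` partitioned into protagonist states `Sp`
and adversary states `Sa`, an initial protagonist state, and partial transition functions
`Tp : Sp × Up ⇀ Sa`, `Ta : Sa × Ua ⇀ Sp` (encoded via `Option`). -/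
structure Arena (S Up Ua : Type*) where
  Sp : Set S
  Sa : Set S
  partition : ∀ s, s ∈ Sp ↔ s ∉ Sa
  sinit : S
  init_p : sinit ∈ Sp
  Tp : S → Up → Option S
  Ta : S → Ua → Option S
  Tp_dom : ∀ s u s', Tp s u = some s' → s ∈ Sp ∧ s' ∈ Sa
  Ta_dom : ∀ s u s', Ta s u = some s' → s ∈ Sa ∧ s' ∈ Sp

namespace Arena

variable {S Up Ua : Type*}

/-- `s'` is reachable from `s` by an enabled transition. -/
def step (A : Arena S Up Ua) (s s' : S) : Prop :=
  (∃ u, A.Tp s u = some s') ∨ (∃ u, A.Ta s u = some s')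

/-- The iteration `Losing^j`: `Losing^0 = Unsafe`, and `Losing^{j+1}` adds all states
every enabled transition of which leads into `Losing^j`. -/
def losingIter (A : Arena S Up Ua) (Unsafe : Set S) : ℕ → Set S
  | 0 => Unsafe
  | j + 1 =>
      losingIter A Unsafe j ∪ { s | ∀ s', A.step s s' → s' ∈ losingIter A Unsafe j }

/-- `Losing = ⋃_j Losing^j`. -/
def losing (A : Arena S Up Ua) (Unsafe : Set S) : Set S :=
  ⋃ j, A.losingIter Unsafe j

/-- An adviser assigns to each adversary state a set of forbidden inputs, all of which
are enabled there. -/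
def IsAdviser (A : Arena S Up Ua) (α : S → Set Ua) : Prop :=
  ∀ s u, u ∈ α s → s ∈ A.Sa ∧ (A.Ta s u).isSome

/-- The nominal adviser `α⁰`: at an unsafe adversary state it forbids all enabled inputs,
otherwise it forbids exactly the enabled inputs leading into `Losing`. -/
def nominal (A : Arena S Up Ua) (Unsafe : Set S) : S → Set Ua := fun s =>
  { u | (A.Ta s u).isSome ∧
      (s ∈ Unsafe ∨ ∃ s', A.Ta s u = some s' ∧ s' ∈ A.losing Unsafe) }

/-- An (infinite) play: starts at `sinit` and follows enabled transitions. -/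
def IsPlay (A : Arena S Up Ua) (π : ℕ → S) : Prop :=
  π 0 = A.sinit ∧ ∀ k, A.step (π k) (π (k + 1))

/-- A sequence respects an adviser `α` if every move from an adversary state is made
by an input not forbidden by `α`. -/
def Respects (A : Arena S Up Ua) (α : S → Set Ua) (π : ℕ → S) : Prop :=
  ∀ k, π k ∈ A.Sa → ∃ u, u ∉ α (π k) ∧ A.Ta (π k) u = some (π (k + 1))

/-- The list of the first `k+1` states of `π`. -/
def prefixList (π : ℕ → S) (k : ℕ) : List S := (List.range (k + 1)).map π

/-- Infinite `σ`-consistent `α`-respecting plays. -/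
def ConsPlay (A : Arena S Up Ua) (σ : List S → Up) (α : S → Set Ua) (π : ℕ → S) : Prop :=
  π 0 = A.sinit ∧
  (∀ k, π k ∈ A.Sp → A.Tp (π k) (σ (prefixList π k)) = some (π (k + 1))) ∧
  (∀ k, π k ∈ A.Sa → ∃ u, u ∉ α (π k) ∧ A.Ta (π k) u = some (π (k + 1)))

/-- Finite `σ`-consistent `α`-respecting prefixes (with `n` transitions). -/
def ConsPrefix (A : Arena S Up Ua) (σ : List S → Up) (α : S → Set Ua)
    (π : ℕ → S) (n : ℕ) : Prop :=
  π 0 = A.sinit ∧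
  (∀ k < n, π k ∈ A.Sp → A.Tp (π k) (σ (prefixList π k)) = some (π (k + 1))) ∧
  (∀ k < n, π k ∈ A.Sa → ∃ u, u ∉ α (π k) ∧ A.Ta (π k) u = some (π (k + 1)))

/-- `σ` is a winning strategy for the adviser `α`: every finite `σ`-consistent
`α`-respecting prefix extends to an infinite `σ`-consistent `α`-respecting play, and
every `σ`-consistent `α`-respecting play is winning (never visits `Unsafe`). -/
def WinningFor (A : Arena S Up Ua) (Unsafe : Set S) (α : S → Set Ua)
    (σ : List S → Up) : Prop :=
  (∀ π n, A.ConsPrefix σ α π n →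
    ∃ π', (∀ k ≤ n, π' k = π k) ∧ A.ConsPlay σ α π') ∧
  (∀ π, A.ConsPlay σ α π → ∀ k, π k ∉ Unsafe)

/-- A good adviser: an adviser admitting a winning protagonist strategy. -/
def GoodAdviser (A : Arena S Up Ua) (Unsafe : Set S) (α : S → Set Ua) : Prop :=
  A.IsAdviser α ∧ ∃ σ : List S → Up, A.WinningFor Unsafe α σ

/-- Blocking states of the arena: the least set containing every state all of whose
enabled transitions lead into the set (in particular states with no enabled input). -/
inductive Blocked (A : Arena S Up Ua) : S → Prop
  | intro (s : S) (h : ∀ s', A.step s s' → Blocked A s') : Blocked A s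

/-- Blocking states of the `α`-restricted arena: the least set `B` such that an adversary
state belongs to `B` whenever every enabled input is forbidden or leads into `B`, and a
protagonist state belongs to `B` whenever every enabled transition leads into `B`. -/
inductive BlockedRel (A : Arena S Up Ua) (α : S → Set Ua) : S → Prop
  | adv (s : S) (hs : s ∈ A.Sa)
      (h : ∀ u s', A.Ta s u = some s' → u ∉ α s → BlockedRel A α s') :
      BlockedRel A α s
  | pro (s : S) (hs : s ∈ A.Sp)
      (h : ∀ u s', A.Tp s u = some s' → BlockedRel A α s') :
      BlockedRel A α s

/-- `γ(σ)`: the supremum, over `σ`-consistent `α`-respecting plays, of the limsup of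
the running average of the numbers of inputs forbidden at the visited adversary states
(which occupy the odd positions of a play). -/
noncomputable def gamma (A : Arena S Up Ua) (α : S → Set Ua) (σ : List S → Up) : ℝ :=
  sSup { x | ∃ π, A.ConsPlay σ α π ∧
    x = limsup (fun n => (∑ j ∈ Finset.range n, ((α (π (2 * j + 1))).ncard : ℝ)) / (n : ℝ))
          atTop }

/-- `λ(α)`: the infimum of `γ(σ)` over winning strategies `σ` for `α`. -/
noncomputable def lam (A : Arena S Up Ua) (Unsafe : Set S) (α : S → Set Ua) : ℝ :=
  sInf { x | ∃ σ, A.WinningFor Unsafe α σ ∧ x = A.gamma α σ }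

/-- The mean-payoff weight of the `k`-th transition of `π`: `-|α(s_a)|` on protagonist
transitions (entering the adversary state `s_a`) and `0` on adversary transitions. -/
noncomputable def mpWeight (A : Arena S Up Ua) (α : S → Set Ua) (π : ℕ → S) (k : ℕ) : ℝ :=
  A.Sp.indicator (fun _ => -((α (π (k + 1))).ncard : ℝ)) (π k)

/-- `ν(σ)`: the mean-payoff value secured by `σ`. -/
noncomputable def nu (A : Arena S Up Ua) (α : S → Set Ua) (σ : List S → Up) : ℝ :=
  sInf { x | ∃ π, A.ConsPlay σ α π ∧
    x = liminf (fun n => (∑ k ∈ Finset.range n, A.mpWeight α π k) / (n : ℝ)) atTop }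

end Arena


namespace Arena

lemma losingIter_mono' {S Up Ua : Type*} (A : Arena S Up Ua) (U : Set S) :
    Monotone (A.losingIter U) := by
  apply monotone_nat_of_le_succ
  intro j
  exact Set.subset_union_left

lemma mem_losing_of_steps {S Up Ua : Type*} [Fintype S] (A : Arena S Up Ua) (U : Set S)
    (s : S) (h : ∀ s', A.step s s' → s' ∈ A.losing U) : s ∈ A.losing U := by
  classical
  have hx : ∀ s' : S, ∃ j, s' ∈ A.losing U → s' ∈ A.losingIter U j := by
    intro s'
    by_cases hs : s' ∈ A.losing U
    · obtain ⟨j, hj⟩ := Set.mem_iUnion.mp hs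
      exact ⟨j, fun _ => hj⟩
    · exact ⟨0, fun h => absurd h hs⟩
  choose g hg using hx
  set N := Finset.univ.sup g with hN
  have hall : ∀ s', A.step s s' → s' ∈ A.losingIter U N := fun s' hs =>
    A.losingIter_mono' U (Finset.le_sup (Finset.mem_univ s')) (hg s' (h s' hs))
  exact Set.mem_iUnion.mpr ⟨N + 1, Or.inr hall⟩

end Arena

/-- no state outside `Losing` is a blocking state of the arena restricted
by the nominal adviser `α⁰`; equivalently, the blocking states of the `α⁰`-restricted
arena are contained in `Losing`. -/
theorem blocking_of_nominal_subset_losing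
    {S Up Ua : Type*} [Fintype S] [Fintype Up] [Fintype Ua]
    (A : Arena S Up Ua) (Unsafe : Set S) :
    (∀ s, s ∉ A.losing Unsafe → ¬ A.BlockedRel (A.nominal Unsafe) s) ∧
    { s | A.BlockedRel (A.nominal Unsafe) s } ⊆ A.losing Unsafe := by
  have key : ∀ s, A.BlockedRel (A.nominal Unsafe) s → s ∈ A.losing Unsafe := by
    intro s hb
    induction hb with
    | adv s hsa h ih =>
      by_cases hsU : s ∈ Unsafe
      · exact Set.mem_iUnion.mpr ⟨0, hsU⟩
      apply A.mem_losing_of_steps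
      intro s' hstep
      rcases hstep with ⟨u, hu⟩ | ⟨u, hu⟩
      · exact absurd hsa ((A.partition s).mp (A.Tp_dom s u s' hu).1)
      · by_cases hls : s' ∈ A.losing Unsafe
        · exact hls
        · refine ih u s' hu ?_
          intro hmem
          rcases hmem.2 with hU | ⟨s'', hs'', hls''⟩
          · exact hsU hU
          · rw [hu] at hs''
            exact hls (Option.some_injective _ hs'' ▸ hls'')
    | pro s hsp h ih =>
      apply A.mem_losing_of_steps
      intro s' hstep
      rcases hstep with ⟨u, hu⟩ | ⟨u, hu⟩
      · exact ih u s' hu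
      · exact absurd (A.Ta_dom s u s' hu).1 ((A.partition s).mp hsp)
  exact ⟨fun s hs hb => hs (key s hb), fun s hb => key s hb⟩
end

section
/- Let α be any adviser refining the nominal one, i.e., α⁰(s_a) ⊆ α(s_a) for every adversary state s_a. If s_init ∉ Losing, then every play respecting α avoids Losing entirely and is therefore winning. Consequently, every protagonist strategy all of whose α-respecting consistent plays exist is winning for α (the sets Σ_p^α and Ω_p^α coincide). -/
open Filter

/-- for any adviser `α` refining the nominal one, if `sinit ∉ Losing` then
every play respecting `α` avoids `Losing` entirely and is winning; consequently every
protagonist strategy all of whose `α`-respecting consistent plays exist (i.e. with the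
prefix-extension property) is winning for `α`. -/
theorem refining_adviser_plays_winning
    {S Up Ua : Type*} [Fintype S] [Fintype Up] [Fintype Ua]
    (A : Arena S Up Ua) (Unsafe : Set S) (α : S → Set Ua)
    (hadv : A.IsAdviser α)
    (href : ∀ s, A.nominal Unsafe s ⊆ α s)
    (hinit : A.sinit ∉ A.losing Unsafe) :
    (∀ π : ℕ → S, A.IsPlay π → A.Respects α π →
      ∀ k, π k ∉ A.losing Unsafe ∧ π k ∉ Unsafe) ∧
    (∀ σ : List S → Up,
      (∀ π n, A.ConsPrefix σ α π n →
        ∃ π', (∀ k ≤ n, π' k = π k) ∧ A.ConsPlay σ α π') →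
      A.WinningFor Unsafe α σ) := by
  have hUsub : Unsafe ⊆ A.losing Unsafe := fun s hs => Set.mem_iUnion.2 ⟨0, hs⟩
  have hchar : ∀ s, s ∈ A.losing Unsafe →
      s ∈ Unsafe ∨ ∀ s', A.step s s' → s' ∈ A.losing Unsafe := by
    intro s hs
    obtain ⟨j, hj⟩ := Set.mem_iUnion.1 hs
    clear hs
    induction j with
    | zero => exact Or.inl hj
    | succ j ih =>
      rcases hj with h | h
      · exact ih h
      · exact Or.inr fun s' hstep => Set.mem_iUnion.2 ⟨j, h s' hstep⟩
  have main : ∀ π : ℕ → S, A.IsPlay π → A.Respects α π →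
      ∀ k, π k ∉ A.losing Unsafe := by
    intro π hplay hresp k
    induction k with
    | zero => rw [hplay.1]; exact hinit
    | succ k ih =>
      intro hlose
      rcases hplay.2 k with ⟨u, hu⟩ | ⟨u, hu⟩
      · -- protagonist move: π (k+1) ∈ Sa, losing adversary state forces a forbidden move
        have hSa : π (k + 1) ∈ A.Sa := (A.Tp_dom _ _ _ hu).2
        obtain ⟨v, hv, hvT⟩ := hresp (k + 1) hSa
        apply hv
        apply href
        refine ⟨by rw [hvT]; rfl, ?_⟩
        rcases hchar _ hlose with hUn | hall
        · exact Or.inl hUn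
        · exact Or.inr ⟨π (k + 2), hvT, hall _ (Or.inr ⟨v, hvT⟩)⟩
      · -- adversary move: the respecting move cannot enter losing
        have hSa : π k ∈ A.Sa := (A.Ta_dom _ _ _ hu).1
        obtain ⟨v, hv, hvT⟩ := hresp k hSa
        exact hv (href _ ⟨by rw [hvT]; rfl, Or.inr ⟨π (k + 1), hvT, hlose⟩⟩)
  have part1 : ∀ π : ℕ → S, A.IsPlay π → A.Respects α π →
      ∀ k, π k ∉ A.losing Unsafe ∧ π k ∉ Unsafe :=
    fun π hp hr k => ⟨main π hp hr k, fun hU => main π hp hr k (hUsub hU)⟩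
  refine ⟨part1, fun σ hext => ⟨hext, fun π hcp k => ?_⟩⟩
  have hplay : A.IsPlay π := by
    refine ⟨hcp.1, fun k => ?_⟩
    by_cases h : π k ∈ A.Sa
    · obtain ⟨u, _, hT⟩ := hcp.2.2 k h
      exact Or.inr ⟨u, hT⟩
    · exact Or.inl ⟨_, hcp.2.1 k ((A.partition _).2 h)⟩
  exact (part1 π hplay hcp.2.2 k).2
end

section
/- If some good adviser exists for the safety game, then there exists a good adviser α* refining the nominal one (α⁰(s_a) ⊆ α*(s_a) for every adversary state s_a) which is least-limiting among all good advisers: λ(α*) ≤ λ(α) for every good adviser α, and λ(α*) = inf over the (finite, nonempty) set of good advisers refining α⁰ of λ(α). -/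
open Filter

section Aux

open Arena Filter

variable {S Up Ua : Type*} (A : Arena S Up Ua)

lemma aux_mem_sp_or_sa (s : S) : s ∈ A.Sp ∨ s ∈ A.Sa := by
  by_cases hs : s ∈ A.Sa
  · exact Or.inr hs
  · exact Or.inl ((A.partition s).2 hs)

lemma aux_consPlay_step {σ : List S → Up} {α : S → Set Ua} {π : ℕ → S}
    (hπ : A.ConsPlay σ α π) (k : ℕ) : A.step (π k) (π (k + 1)) := by
  rcases aux_mem_sp_or_sa A (π k) with hs | hs
  · exact Or.inl ⟨_, hπ.2.1 k hs⟩
  · obtain ⟨u, _, hu⟩ := hπ.2.2 k hs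
    exact Or.inr ⟨u, hu⟩

lemma aux_consPlay_not_losing {Unsafe : Set S} {σ : List S → Up} {α : S → Set Ua}
    {π : ℕ → S} (hw : A.WinningFor Unsafe α σ) (hπ : A.ConsPlay σ α π) (k : ℕ) :
    π k ∉ A.losing Unsafe := by
  intro hk
  rw [Arena.losing, Set.mem_iUnion] at hk
  obtain ⟨j, hj⟩ := hk
  induction j generalizing k with
  | zero => exact hw.2 π hπ k hj
  | succ j ih =>
    rcases hj with hj | hj
    · exact ih k hj
    · exact ih (k + 1) (hj _ (aux_consPlay_step A hπ k))

lemma aux_visited_not_losing {Unsafe : Set S} {σ : List S → Up} {α : S → Set Ua}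
    {π : ℕ → S} (hw : A.WinningFor Unsafe α σ) (hπ : A.ConsPlay σ α π) (k : ℕ)
    (hSa : π k ∈ A.Sa) (u : Ua) (hu : u ∉ α (π k)) (s' : S)
    (hTa : A.Ta (π k) u = some s') : s' ∉ A.losing Unsafe := by
  classical
  set π'' : ℕ → S := fun j => if j = k + 1 then s' else π j with hπ''
  have hag : ∀ j ≤ k, π'' j = π j := by
    intro j hj
    simp [hπ'', Nat.ne_of_lt (Nat.lt_succ_of_le hj)]
  have hpl : ∀ j ≤ k, Arena.prefixList π'' j = Arena.prefixList π j := by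
    intro j hj
    unfold Arena.prefixList
    refine List.map_congr_left ?_
    intro i hi
    exact hag i (le_trans (Nat.lt_succ_iff.mp (List.mem_range.mp hi)) hj)
  have hpre : A.ConsPrefix σ α π'' (k + 1) := by
    refine ⟨by rw [hag 0 (Nat.zero_le k)]; exact hπ.1, ?_, ?_⟩
    · intro j hj hsp
      have hjk : j ≤ k := Nat.lt_succ_iff.mp hj
      rw [hag j hjk] at hsp
      rcases lt_or_eq_of_le hjk with hlt | rfl
      · rw [hag j hjk, hpl j hjk, hag (j + 1) hlt]
        exact hπ.2.1 j hsp
      · exact absurd hSa ((A.partition _).1 hsp)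
    · intro j hj hsa
      have hjk : j ≤ k := Nat.lt_succ_iff.mp hj
      rw [hag j hjk] at hsa ⊢
      rcases lt_or_eq_of_le hjk with hlt | rfl
      · rw [hag (j + 1) hlt]
        exact hπ.2.2 j hsa
      · refine ⟨u, hu, ?_⟩
        have : π'' (j + 1) = s' := by simp [hπ'']
        rw [this, hTa]
  obtain ⟨π', hπ'ag, hπ'⟩ := hw.1 π'' (k + 1) hpre
  have hs' : π' (k + 1) = s' := by
    rw [hπ'ag (k + 1) le_rfl]; simp [hπ'']
  rw [← hs']
  exact aux_consPlay_not_losing A hw hπ' (k + 1)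

lemma aux_consPlay_mono {σ : List S → Up} {α α' : S → Set Ua} {π : ℕ → S}
    (hsub : ∀ s, α s ⊆ α' s) (hπ : A.ConsPlay σ α' π) : A.ConsPlay σ α π :=
  ⟨hπ.1, hπ.2.1, fun k hk => (hπ.2.2 k hk).imp fun u hu =>
    ⟨fun hm => hu.1 (hsub _ hm), hu.2⟩⟩

lemma aux_consPrefix_mono {σ : List S → Up} {α α' : S → Set Ua} {π : ℕ → S} {n : ℕ}
    (hsub : ∀ s, α s ⊆ α' s) (hπ : A.ConsPrefix σ α' π n) : A.ConsPrefix σ α π n :=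
  ⟨hπ.1, hπ.2.1, fun k hk hsa => (hπ.2.2 k hk hsa).imp fun u hu =>
    ⟨fun hm => hu.1 (hsub _ hm), hu.2⟩⟩

lemma aux_consPlay_union {Unsafe : Set S} {σ : List S → Up} {α : S → Set Ua} {π : ℕ → S}
    (hw : A.WinningFor Unsafe α σ) (hπ : A.ConsPlay σ α π) :
    A.ConsPlay σ (fun s => α s ∪ A.nominal Unsafe s) π := by
  refine ⟨hπ.1, hπ.2.1, ?_⟩
  intro k hSa
  obtain ⟨u, hu, hTa⟩ := hπ.2.2 k hSa
  refine ⟨u, ?_, hTa⟩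
  rintro (hmem | ⟨hsome, hcase⟩)
  · exact hu hmem
  · rcases hcase with hun | ⟨s', hs', hlos⟩
    · exact hw.2 π hπ k hun
    · rw [hTa] at hs'
      obtain rfl : π (k + 1) = s' := Option.some.inj hs'
      exact aux_consPlay_not_losing A hw hπ (k + 1) hlos

lemma aux_union_eq_on_play {Unsafe : Set S} {σ : List S → Up} {α : S → Set Ua} {π : ℕ → S}
    (hw : A.WinningFor Unsafe α σ) (hπ : A.ConsPlay σ α π) (k : ℕ) :
    α (π k) ∪ A.nominal Unsafe (π k) = α (π k) := by
  rw [Set.union_eq_left]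
  intro u hu
  obtain ⟨hsome, hcase⟩ := hu
  obtain ⟨s', hs'⟩ := Option.isSome_iff_exists.mp hsome
  by_cases hmem : u ∈ α (π k)
  · exact hmem
  exfalso
  have hSa : π k ∈ A.Sa := (A.Ta_dom _ _ _ hs').1
  rcases hcase with hun | ⟨s'', hs'', hlos⟩
  · exact hw.2 π hπ k hun
  · rw [hs'] at hs''
    obtain rfl : s' = s'' := Option.some.inj hs''
    exact aux_visited_not_losing A hw hπ k hSa u hmem s' hs' hlos

lemma aux_gamma_union_eq {Unsafe : Set S} {σ : List S → Up} {α : S → Set Ua}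
    (hw : A.WinningFor Unsafe α σ) :
    A.gamma (fun s => α s ∪ A.nominal Unsafe s) σ = A.gamma α σ := by
  unfold Arena.gamma
  congr 1
  ext x
  constructor
  · rintro ⟨π, hπ, rfl⟩
    have hπα : A.ConsPlay σ α π :=
      aux_consPlay_mono A (fun s => Set.subset_union_left) hπ
    exact ⟨π, hπα, by simp only [aux_union_eq_on_play A hw hπα]⟩
  · rintro ⟨π, hπ, rfl⟩
    exact ⟨π, aux_consPlay_union A hw hπ,
      by simp only [aux_union_eq_on_play A hw hπ]⟩

lemma aux_winning_union {Unsafe : Set S} {σ : List S → Up} {α : S → Set Ua}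
    (hw : A.WinningFor Unsafe α σ) :
    A.WinningFor Unsafe (fun s => α s ∪ A.nominal Unsafe s) σ := by
  constructor
  · intro π n hpre
    obtain ⟨π', hag, hπ'⟩ :=
      hw.1 π n (aux_consPrefix_mono A (fun s => Set.subset_union_left) hpre)
    exact ⟨π', hag, aux_consPlay_union A hw hπ'⟩
  · intro π hπ
    exact hw.2 π (aux_consPlay_mono A (fun s => Set.subset_union_left) hπ)

lemma aux_isAdviser_union {Unsafe : Set S} {α : S → Set Ua} (hα : A.IsAdviser α) :
    A.IsAdviser (fun s => α s ∪ A.nominal Unsafe s) := by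
  rintro s u (hu | ⟨hsome, -⟩)
  · exact hα s u hu
  · obtain ⟨s', hs'⟩ := Option.isSome_iff_exists.mp hsome
    exact ⟨(A.Ta_dom s u s' hs').1, hsome⟩

lemma aux_gamma_nonneg [Fintype Ua] (α : S → Set Ua) (σ : List S → Up) :
    0 ≤ A.gamma α σ := by
  apply Real.sSup_nonneg
  rintro x ⟨π, hπ, rfl⟩
  have hb : ∀ s : Set Ua, (s.ncard : ℝ) ≤ (Fintype.card Ua : ℝ) := by
    intro s
    have : s.ncard ≤ Fintype.card Ua := by
      have := Set.ncard_le_ncard (Set.subset_univ s) Set.finite_univ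
      rwa [Set.ncard_univ, Nat.card_eq_fintype_card] at this
    exact_mod_cast this
  apply Filter.le_limsup_of_frequently_le
  · refine Filter.Frequently.of_forall fun n => ?_
    apply div_nonneg _ (Nat.cast_nonneg n)
    exact Finset.sum_nonneg fun j _ => Nat.cast_nonneg _
  · refine Filter.isBoundedUnder_of ⟨(Fintype.card Ua : ℝ), fun n => ?_⟩
    rcases Nat.eq_zero_or_pos n with rfl | hn
    · simp
    · rw [div_le_iff₀ (by exact_mod_cast hn)]
      calc ∑ j ∈ Finset.range n, ((α (π (2 * j + 1))).ncard : ℝ)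
          ≤ ∑ _j ∈ Finset.range n, (Fintype.card Ua : ℝ) :=
            Finset.sum_le_sum fun j _ => hb _
        _ = (Fintype.card Ua : ℝ) * n := by
            rw [Finset.sum_const, Finset.card_range, nsmul_eq_mul, mul_comm]

end Aux


/-- if some good adviser exists, then there is a good adviser `α⋆` refining
the nominal one that is least limiting among all good advisers, and whose level of
limitation is the infimum over the set of good advisers refining `α⁰`. -/
theorem exists_least_limiting_good_adviser
    {S Up Ua : Type*} [Fintype S] [Fintype Up] [Fintype Ua]
    (A : Arena S Up Ua) (Unsafe : Set S)
    (h : ∃ α : S → Set Ua, A.GoodAdviser Unsafe α) :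
    ∃ αs : S → Set Ua, A.GoodAdviser Unsafe αs ∧
      (∀ s, A.nominal Unsafe s ⊆ αs s) ∧
      (∀ α : S → Set Ua, A.GoodAdviser Unsafe α →
        A.lam Unsafe αs ≤ A.lam Unsafe α) ∧
      A.lam Unsafe αs =
        sInf { x | ∃ α : S → Set Ua, A.GoodAdviser Unsafe α ∧
          (∀ s, A.nominal Unsafe s ⊆ α s) ∧ x = A.lam Unsafe α } := by
  classical
  have key : ∀ α : S → Set Ua, A.GoodAdviser Unsafe α →
      ∃ α' : S → Set Ua, A.GoodAdviser Unsafe α' ∧ (∀ s, A.nominal Unsafe s ⊆ α' s) ∧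
        A.lam Unsafe α' ≤ A.lam Unsafe α := by
    rintro α ⟨hadv, σ₀, hσ₀⟩
    refine ⟨fun s => α s ∪ A.nominal Unsafe s,
      ⟨aux_isAdviser_union A hadv, σ₀, aux_winning_union A hσ₀⟩,
      fun s => Set.subset_union_right, ?_⟩
    unfold Arena.lam
    apply csInf_le_csInf
    · refine ⟨0, fun x hx => ?_⟩
      obtain ⟨σ, hσ, rfl⟩ := hx
      exact aux_gamma_nonneg A _ σ
    · exact ⟨A.gamma α σ₀, σ₀, hσ₀, rfl⟩
    · rintro x ⟨σ, hσ, rfl⟩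
      exact ⟨σ, aux_winning_union A hσ, (aux_gamma_union_eq A hσ).symm⟩
  set T : Set ℝ := { x | ∃ α : S → Set Ua, A.GoodAdviser Unsafe α ∧
      (∀ s, A.nominal Unsafe s ⊆ α s) ∧ x = A.lam Unsafe α } with hT
  have hTfin : T.Finite := by
    have hsub : T ⊆ (fun α : S → Set Ua => A.lam Unsafe α) '' Set.univ := by
      rintro x ⟨α, _, _, rfl⟩
      exact ⟨α, trivial, rfl⟩
    exact (Set.finite_univ.image _).subset hsub
  have hTne : T.Nonempty := by
    obtain ⟨α, hα⟩ := h
    obtain ⟨α', h1, h2, _⟩ := key α hα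
    exact ⟨A.lam Unsafe α', α', h1, h2, rfl⟩
  obtain ⟨αs, hgood, href, heq⟩ := hTne.csInf_mem hTfin
  refine ⟨αs, hgood, href, ?_, heq.symm⟩
  intro α hα
  obtain ⟨α', h1, h2, h3⟩ := key α hα
  have hle : A.lam Unsafe αs ≤ A.lam Unsafe α' := by
    rw [← heq]
    exact csInf_le hTfin.bddBelow ⟨α', h1, h2, rfl⟩
  exact hle.trans h3
end

section
/- (Mean-payoff reduction) Let α be a good adviser refining α⁰ (α⁰(s_a) ⊆ α(s_a) for all adversary states s_a), with s_init ∉ Losing. Assign weights w(s_p, s_a) = −|α(s_a)| to every enabled protagonist transition T_p(s_p, u_p) = s_a and w(s_a, s_p) = 0 to every α-allowed adversary transition. For a winning strategy σ_p for α define its mean-payoff value ν(σ_p) = inf over σ_p-consistent α-respecting plays π of liminf_{n→∞} (1/n) Σ_{j=1}^n w(π(j), π(j+1)). Then ν(σ_p) = −(1/2)·γ(σ_p) for every winning strategy σ_p, and sup over winning strategies σ_p of ν(σ_p) = −(1/2)·λ(α); hence a strategy maximizes the mean-payoff value if and only if it minimizes γ, i.e., computing λ(α) and an optimal winning strategy reduces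 to solving the mean-payoff game. -/
/-!
Protagonist and adversary alternate along a play, so among the first `n` transitions only the
`⌈n/2⌉` protagonist ones carry weight, namely `-|α(π(2j+1))|`. The running mean payoff at time
`n` is thus `-(⌈n/2⌉/n)` times the running average of `|α|` over the first `⌈n/2⌉`
adversary states; as `⌈n/2⌉/n → 1/2` and `|α| ≤ |U_a|`, its `liminf` is `-(1/2)` times the
`limsup` defining `γ`, play by play. Multiplication by `-(1/2)` then exchanges infima and suprema
over plays and over strategies.
-/

open Filter

open Topology Pointwise

theorem EReal.coe_limsup {ι : Type*} {F : Filter ι} [F.NeBot] {f : ι → ℝ}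
    (hlo : IsBoundedUnder (· ≥ ·) F f) (hhi : IsBoundedUnder (· ≤ ·) F f) :
    ((limsup f F : ℝ) : EReal) = limsup (fun i => (f i : EReal)) F :=
  EReal.coe_strictMono.monotone.map_limsup_of_continuousAt f
    continuous_coe_real_ereal.continuousAt hhi hlo.isCoboundedUnder_le

theorem Real.liminf_neg {ι : Type*} {F : Filter ι} [F.NeBot] {f : ι → ℝ}
    (hlo : IsBoundedUnder (· ≥ ·) F f) (hhi : IsBoundedUnder (· ≤ ·) F f) :
    liminf (fun i => -f i) F = -limsup f F :=
  (Antitone.map_limsup_of_continuousAt (fun _ _ h => neg_le_neg h) f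
    continuous_neg.continuousAt hhi hlo.isCoboundedUnder_le).symm

section LinearGrowth

variable {u : ℕ → ℝ} {B : ℝ}

theorem Monotone.div_le_of_le_mul (hu : Monotone u) (hu0 : 0 ≤ u) (huB : ∀ n, u n ≤ B * n)
    {m n : ℕ} (hmn : m ≤ n) : u m / n ≤ B := by
  rcases n.eq_zero_or_pos with rfl | hn
  · simpa using (hu0 1).trans (huB 1)
  · rw [div_le_iff₀ (by positivity)]
    exact (hu hmn).trans (huB n)

theorem Monotone.isBoundedUnder_comp_div (hu : Monotone u) (hu0 : 0 ≤ u)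
    (huB : ∀ n, u n ≤ B * n) {v : ℕ → ℕ} (hv : ∀ n, v n ≤ n) :
    IsBoundedUnder (· ≥ ·) atTop (fun n => u (v n) / n) ∧
      IsBoundedUnder (· ≤ ·) atTop (fun n => u (v n) / n) :=
  ⟨isBoundedUnder_of ⟨0, fun n => div_nonneg (hu0 _) n.cast_nonneg⟩,
    isBoundedUnder_of ⟨B, fun n => hu.div_le_of_le_mul hu0 huB (hv n)⟩⟩

theorem Monotone.limsup_comp_div (hu : Monotone u) (hu0 : 0 ≤ u) (huB : ∀ n, u n ≤ B * n)
    {v : ℕ → ℕ} (hv : ∀ n, v n ≤ n) {c : ℝ}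
    (hc : Tendsto (fun n => (v n : ℝ) / n) atTop (𝓝 c)) (hc0 : c ≠ 0) :
    limsup (fun n => u (v n) / n) atTop = c * limsup (fun n => u n / n) atTop := by
  have hcoe : ∀ w : ℕ → ℕ, (∀ n, w n ≤ n) →
      ((limsup (fun n => u (w n) / n) atTop : ℝ) : EReal) =
        LinearGrowth.linearGrowthSup ((((↑) : ℝ → EReal) ∘ u) ∘ w) := fun w hw =>
    EReal.coe_limsup (hu.isBoundedUnder_comp_div hu0 huB hw).1
      (hu.isBoundedUnder_comp_div hu0 huB hw).2
  have hcE : Tendsto (fun n => ((v n : ℕ) : EReal) / n) atTop (𝓝 (c : EReal)) :=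
    (continuous_coe_real_ereal.tendsto c).comp hc
  have key := (EReal.coe_strictMono.monotone.comp hu).linearGrowthSup_comp hcE
    (by exact_mod_cast hc0) (EReal.coe_ne_top c)
  have hid : ((limsup (fun n => u n / n) atTop : ℝ) : EReal) =
      LinearGrowth.linearGrowthSup (((↑) : ℝ → EReal) ∘ u) := hcoe id fun _ => le_rfl
  rw [← hcoe v hv, ← hid] at key
  exact_mod_cast key

end LinearGrowth

theorem tendsto_succ_div_two_div_self :
    Tendsto (fun n : ℕ => (((n + 1) / 2 : ℕ) : ℝ) / n) atTop (𝓝 (1 / 2)) := by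
  have hup : Tendsto (fun n : ℕ => (1 : ℝ) / 2 + 1 / 2 * (1 / n)) atTop (𝓝 (1 / 2)) := by
    simpa using tendsto_const_nhds.add (tendsto_one_div_atTop_nhds_zero_nat.const_mul (1 / 2 : ℝ))
  refine tendsto_of_tendsto_of_tendsto_of_le_of_le' tendsto_const_nhds hup ?_ ?_
  all_goals filter_upwards [eventually_gt_atTop 0] with n hn
  · rw [le_div_iff₀ (by positivity)]
    have : (n : ℝ) ≤ 2 * ((n + 1) / 2 : ℕ) := by
      exact_mod_cast (by omega : n ≤ 2 * ((n + 1) / 2))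
    linarith
  · have : 2 * (((n + 1) / 2 : ℕ) : ℝ) ≤ n + 1 := by
      exact_mod_cast (by omega : 2 * ((n + 1) / 2) ≤ n + 1)
    rw [div_le_iff₀ (by positivity)]
    field_simp
    linarith

theorem liminf_neg_sum_range_half_div {a : ℕ → ℝ} {B : ℝ} (ha0 : 0 ≤ a)
    (haB : ∀ j, a j ≤ B) :
    liminf (fun n : ℕ => -(∑ j ∈ Finset.range ((n + 1) / 2), a j) / n) atTop =
      -(1 / 2) * limsup (fun n : ℕ => (∑ j ∈ Finset.range n, a j) / n) atTop := by
  set U : ℕ → ℝ := fun m => ∑ j ∈ Finset.range m, a j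
  have hU : Monotone U := fun m n hmn =>
    Finset.sum_le_sum_of_subset_of_nonneg (Finset.range_mono hmn) fun j _ _ => ha0 j
  have hU0 : 0 ≤ U := fun m => Finset.sum_nonneg fun j _ => ha0 j
  have hUB : ∀ m, U m ≤ B * m := fun m => by
    simpa [mul_comm] using Finset.sum_le_card_nsmul (Finset.range m) a B fun j _ => haB j
  have hv : ∀ n, (n + 1) / 2 ≤ n := fun n => by omega
  obtain ⟨hlo, hhi⟩ := hU.isBoundedUnder_comp_div hU0 hUB hv
  simp_rw [neg_div]
  rw [Real.liminf_neg hlo hhi, hU.limsup_comp_div hU0 hUB hv tendsto_succ_div_two_div_self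
    (by norm_num), neg_mul]

theorem Finset.sum_range_ite_even {M : Type*} [AddCommMonoid M] (f : ℕ → M) (n : ℕ) :
    ∑ k ∈ range n, (if Even k then f k else 0) = ∑ j ∈ range ((n + 1) / 2), f (2 * j) := by
  induction n with
  | zero => simp
  | succ n ih =>
    rw [sum_range_succ, ih]
    rcases Nat.even_or_odd' n with ⟨m, rfl | rfl⟩
    · rw [if_pos (even_two_mul m), show (2 * m + 1 + 1) / 2 = (2 * m + 1) / 2 + 1 by omega,
        sum_range_succ, show (2 * m + 1) / 2 = m by omega]
    · rw [if_neg (Nat.not_even_iff_odd.mpr (odd_two_mul_add_one m)), add_zero,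
        show (2 * m + 1 + 1 + 1) / 2 = (2 * m + 1 + 1) / 2 by omega]

theorem Set.setOf_exists_eq_smul {ι M : Type*} [Mul M] {P : ι → Prop} {f g : ι → M} {c : M}
    (hfg : ∀ i, P i → f i = c * g i) :
    {x | ∃ i, P i ∧ x = f i} = c • {x | ∃ i, P i ∧ x = g i} := by
  ext x
  simp only [Set.mem_smul_set, Set.mem_ofPred_eq, smul_eq_mul]
  constructor
  · rintro ⟨i, hi, rfl⟩
    exact ⟨g i, ⟨i, hi, rfl⟩, (hfg i hi).symm⟩
  · rintro ⟨_, ⟨i, hi, rfl⟩, rfl⟩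
    exact ⟨i, hi, (hfg i hi).symm⟩

namespace Arena

variable {S Up Ua : Type*} {A : Arena S Up Ua} {σ : List S → Up} {α : S → Set Ua}
  {π : ℕ → S}

theorem ConsPlay.mem_Sp_iff_even (h : A.ConsPlay σ α π) (k : ℕ) :
    π k ∈ A.Sp ↔ Even k := by
  induction k with
  | zero => simp [h.1, A.init_p]
  | succ k ih =>
    rw [Nat.even_add_one, ← ih]
    by_cases hk : π k ∈ A.Sp
    · have hnext : π (k + 1) ∈ A.Sa := (A.Tp_dom _ _ _ (h.2.1 k hk)).2
      simpa [hk, A.partition] using hnext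
    · obtain ⟨u, -, hu⟩ := h.2.2 k (not_not.mp (mt (A.partition _).mpr hk))
      simp [hk, (A.Ta_dom _ _ _ hu).2]

theorem ConsPlay.mpWeight_eq (h : A.ConsPlay σ α π) (k : ℕ) :
    A.mpWeight α π k = if Even k then -((α (π (k + 1))).ncard : ℝ) else 0 := by
  by_cases hk : Even k
  · simp [mpWeight, hk, (h.mem_Sp_iff_even k).mpr hk]
  · simp [mpWeight, hk, mt (h.mem_Sp_iff_even k).mp hk]

theorem ConsPlay.sum_mpWeight (h : A.ConsPlay σ α π) (n : ℕ) :
    ∑ k ∈ Finset.range n, A.mpWeight α π k =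
      -∑ j ∈ Finset.range ((n + 1) / 2), ((α (π (2 * j + 1))).ncard : ℝ) := by
  simp_rw [h.mpWeight_eq, Finset.sum_range_ite_even, Finset.sum_neg_distrib]

theorem ConsPlay.liminf_mean_mpWeight [Finite Ua] (h : A.ConsPlay σ α π) :
    liminf (fun n => (∑ k ∈ Finset.range n, A.mpWeight α π k) / (n : ℝ)) atTop =
      -(1 / 2) * limsup (fun n =>
        (∑ j ∈ Finset.range n, ((α (π (2 * j + 1))).ncard : ℝ)) / (n : ℝ)) atTop := by
  simp_rw [h.sum_mpWeight]
  exact liminf_neg_sum_range_half_div (fun j => Nat.cast_nonneg _)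
    fun j => Nat.cast_le.mpr (Set.ncard_le_card _)

theorem nu_eq_neg_half_mul_gamma [Finite Ua] (A : Arena S Up Ua) (α : S → Set Ua)
    (σ : List S → Up) : A.nu α σ = -(1 / 2) * A.gamma α σ := by
  rw [nu, Set.setOf_exists_eq_smul fun π hπ => ConsPlay.liminf_mean_mpWeight hπ,
    Real.sInf_smul_of_nonpos (by norm_num), smul_eq_mul, gamma]

end Arena

theorem mean_payoff_reduction_general
    {S Up Ua : Type*} [Fintype Ua]
    (A : Arena S Up Ua) (Unsafe : Set S) (α : S → Set Ua) :
    (∀ σ : List S → Up, A.WinningFor Unsafe α σ →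
      A.nu α σ = -(1 / 2) * A.gamma α σ) ∧
    sSup { x | ∃ σ : List S → Up, A.WinningFor Unsafe α σ ∧ x = A.nu α σ } =
      -(1 / 2) * A.lam Unsafe α ∧
    (∀ σ : List S → Up, A.WinningFor Unsafe α σ →
      ((∀ σ' : List S → Up, A.WinningFor Unsafe α σ' → A.nu α σ' ≤ A.nu α σ) ↔
       (∀ σ' : List S → Up, A.WinningFor Unsafe α σ' →
          A.gamma α σ ≤ A.gamma α σ'))) := by
  have hhalf : -(1 / 2 : ℝ) < 0 := by norm_num
  refine ⟨fun σ _ => A.nu_eq_neg_half_mul_gamma α σ, ?_, fun σ _ => ?_⟩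
  · rw [Set.setOf_exists_eq_smul fun σ _ => A.nu_eq_neg_half_mul_gamma α σ,
      Real.sSup_smul_of_nonpos hhalf.le, smul_eq_mul, Arena.lam]
  · simp only [Arena.nu_eq_neg_half_mul_gamma, mul_le_mul_left_of_neg hhalf]

/-- mean-payoff reduction: for a good adviser `α` refining `α⁰` with
`sinit ∉ Losing`, the mean-payoff value of every winning strategy equals `-(1/2)·γ`,
the optimal mean-payoff value equals `-(1/2)·λ(α)`, and a winning strategy maximizes
the mean-payoff value iff it minimizes `γ`. -/
theorem mean_payoff_reduction
    {S Up Ua : Type*} [Fintype S] [Fintype Up] [Fintype Ua]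
    (A : Arena S Up Ua) (Unsafe : Set S) (α : S → Set Ua)
    (hadv : A.IsAdviser α)
    (href : ∀ s, A.nominal Unsafe s ⊆ α s)
    (hinit : A.sinit ∉ A.losing Unsafe)
    (hgood : A.GoodAdviser Unsafe α) :
    (∀ σ : List S → Up, A.WinningFor Unsafe α σ →
      A.nu α σ = -(1 / 2) * A.gamma α σ) ∧
    sSup { x | ∃ σ : List S → Up, A.WinningFor Unsafe α σ ∧ x = A.nu α σ } =
      -(1 / 2) * A.lam Unsafe α ∧
    (∀ σ : List S → Up, A.WinningFor Unsafe α σ →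
      ((∀ σ' : List S → Up, A.WinningFor Unsafe α σ' → A.nu α σ' ≤ A.nu α σ) ↔
       (∀ σ' : List S → Up, A.WinningFor Unsafe α σ' →
          A.gamma α σ ≤ A.gamma α σ'))) :=
  mean_payoff_reduction_general A Unsafe α
end

section
/- Every adversary state in Losing is a blocking state of the α-restricted arena for any adviser α refining α⁰: if s_a ∈ S_a ∩ Losing and α⁰(s_a) ⊆ α(s_a), then every input enabled at s_a lies in α(s_a), so s_a is blocking; moreover every protagonist state in Losing ∖ Unsafe is blocking in the α-restricted arena, since all its enabled transitions lead to adversary states in Losing. -/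
open Filter

/-- for any adviser `α` refining `α⁰`, every adversary state in `Losing`
has all its enabled inputs forbidden by `α` and is blocking in the `α`-restricted arena;
moreover every protagonist state in `Losing ∖ Unsafe` has all its enabled transitions
leading to adversary states in `Losing` and is blocking in the `α`-restricted arena. -/
theorem losing_states_blocking
    {S Up Ua : Type*} [Fintype S] [Fintype Up] [Fintype Ua]
    (A : Arena S Up Ua) (Unsafe : Set S) (α : S → Set Ua)
    (hadv : A.IsAdviser α)
    (href : ∀ s, A.nominal Unsafe s ⊆ α s) :
    (∀ s ∈ A.Sa, s ∈ A.losing Unsafe →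
      (∀ u : Ua, (A.Ta s u).isSome → u ∈ α s) ∧ A.BlockedRel α s) ∧
    (∀ s ∈ A.Sp, s ∈ A.losing Unsafe → s ∉ Unsafe →
      (∀ u s', A.Tp s u = some s' → s' ∈ A.Sa ∧ s' ∈ A.losing Unsafe) ∧
      A.BlockedRel α s) := by
  have key : ∀ j (s : S), s ∈ A.losingIter Unsafe j → s ∉ Unsafe →
      ∀ s', A.step s s' → s' ∈ A.losing Unsafe := by
    intro j
    induction j with
    | zero => intro s hs hns; exact absurd hs hns
    | succ j ih =>
      intro s hs hns s' hstep
      rcases hs with hs | hs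
      · exact ih s hs hns s' hstep
      · exact Set.mem_iUnion.2 ⟨j, hs s' hstep⟩
  have advPart : ∀ s ∈ A.Sa, s ∈ A.losing Unsafe →
      (∀ u : Ua, (A.Ta s u).isSome → u ∈ α s) ∧ A.BlockedRel α s := by
    intro s hsa hsl
    have hall : ∀ u : Ua, (A.Ta s u).isSome → u ∈ α s := by
      intro u hu
      by_cases hU : s ∈ Unsafe
      · exact href s ⟨hu, Or.inl hU⟩
      · obtain ⟨j, hj⟩ := Set.mem_iUnion.1 hsl
        obtain ⟨s', hs'⟩ := Option.isSome_iff_exists.1 hu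
        have : s' ∈ A.losing Unsafe := key j s hj hU s' (Or.inr ⟨u, hs'⟩)
        exact href s ⟨hu, Or.inr ⟨s', hs', this⟩⟩
    refine ⟨hall, Arena.BlockedRel.adv s hsa ?_⟩
    intro u s' hTa hu
    exact absurd (hall u (Option.isSome_iff_exists.2 ⟨s', hTa⟩)) hu
  refine ⟨advPart, ?_⟩
  intro s hsp hsl hns
  obtain ⟨j, hj⟩ := Set.mem_iUnion.1 hsl
  have hstep : ∀ u s', A.Tp s u = some s' → s' ∈ A.Sa ∧ s' ∈ A.losing Unsafe := by
    intro u s' hT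
    exact ⟨(A.Tp_dom s u s' hT).2, key j s hj hns s' (Or.inl ⟨u, hT⟩)⟩
  refine ⟨hstep, Arena.BlockedRel.pro s hsp ?_⟩
  intro u s' hT
  exact (advPart s' (hstep u s' hT).1 (hstep u s' hT).2).2
end
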